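/- Let 1 < p < 2 and 0 < B < p−1 be real numbers, Ω ⊆ ℝ^N open, I ⊆ ℝ an open interval, and let u : I × Ω → ℝ be everywhere positive, with continuous time derivative ∂_t u, twice continuously differentiable in the space variable, and with nonvanishing spatial gradient ∇u. Suppose u satisfies ∂_t u − Δ_p u + B|∇u|^p/u = 0 at every point of I × Ω. Set γ = (p−1−B)/(p−1), β = (2−p)B/(p−1−B), and w = (1/γ)·u^γ, i.e. w = ((p−1)/(p−1−B))·u^{(p−1−B)/(p−1)}. Then w satisfies γ^β · w^β · ∂_t w − Δ_p w = 0 at every point of I × Ω. -/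

import Mathlib

/-!
Since `∇(u^γ/γ) = u^{γ-1} ∇u`, the flux `|∇w|^{p-2} ∇w` of `w` is `u^{(γ-1)(p-1)} = u^{-B}` times
that of `u`, so the product rule for the divergence gives
`Δ_p w = u^{-B} Δ_p u - B u^{-B-1} |∇u|^p`. The choice of `β` makes `γ^β w^β ∂ₜw = u^{-B} ∂ₜu`,
hence the equation for `w` is `u^{-B}` times the equation for `u`.
-/

/-- The `p`-Laplacian `Δ_p f(x) = div(|∇f|^{p−2}∇f)(x) = ∑ᵢ ∂ᵢ(|∇f|^{p−2} ∂ᵢf)(x)`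
of a function `f : ℝ^N → ℝ`. -/
noncomputable def pLaplacian {N : ℕ} (p : ℝ) (f : EuclideanSpace ℝ (Fin N) → ℝ)
    (x : EuclideanSpace ℝ (Fin N)) : ℝ :=
  ∑ i : Fin N,
    fderiv ℝ
      (fun y => ‖gradient f y‖ ^ (p - 2) * fderiv ℝ f y (EuclideanSpace.single i (1 : ℝ)))
      x (EuclideanSpace.single i (1 : ℝ))

open Filter Topology InnerProductSpace

section PLaplacian

variable {N : ℕ} {p : ℝ} {f g a : EuclideanSpace ℝ (Fin N) → ℝ} {x : EuclideanSpace ℝ (Fin N)}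

noncomputable def pFlux (p : ℝ) (f : EuclideanSpace ℝ (Fin N) → ℝ) (i : Fin N)
    (y : EuclideanSpace ℝ (Fin N)) : ℝ :=
  ‖gradient f y‖ ^ (p - 2) * fderiv ℝ f y (EuclideanSpace.single i 1)

theorem pLaplacian_eq_sum_fderiv_pFlux :
    pLaplacian p f x = ∑ i, fderiv ℝ (pFlux p f i) x (EuclideanSpace.single i 1) :=
  rfl

theorem sum_mul_apply_single (L : EuclideanSpace ℝ (Fin N) →L[ℝ] ℝ)
    (v : EuclideanSpace ℝ (Fin N)) : ∑ i, v i * L (EuclideanSpace.single i 1) = L v := by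
  conv_rhs => rw [← (EuclideanSpace.basisFun (Fin N) ℝ).sum_repr v]
  simp [map_sum]

theorem fderiv_apply_single (f : EuclideanSpace ℝ (Fin N) → ℝ) (y : EuclideanSpace ℝ (Fin N))
    (i : Fin N) : fderiv ℝ f y (EuclideanSpace.single i 1) = gradient f y i := by
  rw [← inner_gradient_left, EuclideanSpace.inner_single_right]
  simp

theorem fderiv_apply_gradient (f : EuclideanSpace ℝ (Fin N) → ℝ) (y : EuclideanSpace ℝ (Fin N)) :
    fderiv ℝ f y (gradient f y) = ‖gradient f y‖ ^ 2 := by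
  rw [← inner_gradient_left, real_inner_self_eq_norm_sq]

theorem differentiableAt_pFlux (hf : ContDiffAt ℝ 2 f x) (hx : gradient f x ≠ 0) (i : Fin N) :
    DifferentiableAt ℝ (pFlux p f i) x := by
  have hdf : DifferentiableAt ℝ (fderiv ℝ f) x :=
    (hf.fderiv_right (m := 1) (by norm_num)).differentiableAt one_ne_zero
  have hgrad : DifferentiableAt ℝ (gradient f) x :=
    (toDual ℝ _).symm.toContinuousLinearEquiv.differentiableAt.comp x hdf
  exact ((hgrad.norm ℝ hx).rpow_const (Or.inl (norm_ne_zero_iff.2 hx))).mul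
    (hdf.clm_apply (differentiableAt_const _))

theorem pLaplacian_eq_of_pFlux_eventuallyEq_mul (hf : ContDiffAt ℝ 2 f x)
    (hx : gradient f x ≠ 0) (ha : DifferentiableAt ℝ a x)
    (hflux : ∀ i, pFlux p g i =ᶠ[𝓝 x] a * pFlux p f i) :
    pLaplacian p g x
      = a x * pLaplacian p f x + ‖gradient f x‖ ^ (p - 2) * fderiv ℝ a x (gradient f x) := by
  have hterm : ∀ i, fderiv ℝ (pFlux p g i) x (EuclideanSpace.single i 1)
      = a x * fderiv ℝ (pFlux p f i) x (EuclideanSpace.single i 1)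
        + ‖gradient f x‖ ^ (p - 2)
          * (gradient f x i * fderiv ℝ a x (EuclideanSpace.single i 1)) := by
    intro i
    rw [(hflux i).fderiv_eq, fderiv_mul ha (differentiableAt_pFlux hf hx i)]
    simp only [add_apply, smul_apply, smul_eq_mul,
      pFlux, fderiv_apply_single]
    ring
  simp only [pLaplacian_eq_sum_fderiv_pFlux, hterm, Finset.sum_add_distrib, ← Finset.mul_sum,
    sum_mul_apply_single]

theorem hasFDerivAt_inv_mul_rpow {E : Type*} [NormedAddCommGroup E] [NormedSpace ℝ E]
    {h : E → ℝ} {h' : E →L[ℝ] ℝ} {y : E} {γ : ℝ} (hh : HasFDerivAt h h' y) (hy : h y ≠ 0)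
    (hγ : γ ≠ 0) : HasFDerivAt (fun z => 1 / γ * h z ^ γ) (h y ^ (γ - 1) • h') y := by
  refine ((hh.rpow_const (p := γ) (Or.inl hy)).const_mul (1 / γ)).congr_fderiv ?_
  rw [smul_smul]
  congr 1
  field_simp

theorem gradient_inv_mul_rpow {γ : ℝ} (hf : DifferentiableAt ℝ f x) (hfx : f x ≠ 0)
    (hγ : γ ≠ 0) : gradient (fun y => 1 / γ * f y ^ γ) x = f x ^ (γ - 1) • gradient f x := by
  rw [gradient, gradient, (hasFDerivAt_inv_mul_rpow hf.hasFDerivAt hfx hγ).fderiv, map_smul]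

theorem pFlux_inv_mul_rpow {γ : ℝ} (hf : DifferentiableAt ℝ f x) (hfx : 0 < f x) (hγ : γ ≠ 0)
    (i : Fin N) :
    pFlux p (fun y => 1 / γ * f y ^ γ) i x = f x ^ ((γ - 1) * (p - 1)) * pFlux p f i x := by
  have hpow : f x ^ ((γ - 1) * (p - 1)) = (f x ^ (γ - 1)) ^ (p - 2) * f x ^ (γ - 1) := by
    rw [← Real.rpow_mul hfx.le, ← Real.rpow_add hfx]
    ring_nf
  rw [pFlux, pFlux, gradient_inv_mul_rpow hf hfx.ne' hγ,
    (hasFDerivAt_inv_mul_rpow hf.hasFDerivAt hfx.ne' hγ).fderiv, norm_smul, Real.norm_eq_abs,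
    abs_of_pos (Real.rpow_pos_of_pos hfx _), Real.mul_rpow (by positivity) (norm_nonneg _), hpow,
    smul_apply, smul_eq_mul]
  ring

theorem pLaplacian_inv_mul_rpow {γ : ℝ} (hf : ContDiffAt ℝ 2 f x) (hfx : 0 < f x)
    (hx : gradient f x ≠ 0) (hγ : γ ≠ 0) :
    pLaplacian p (fun y => 1 / γ * f y ^ γ) x
      = f x ^ ((γ - 1) * (p - 1)) * pLaplacian p f x
        + (γ - 1) * (p - 1) * f x ^ ((γ - 1) * (p - 1) - 1) * ‖gradient f x‖ ^ p := by
  set κ := (γ - 1) * (p - 1)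
  have hnear : ∀ᶠ y in 𝓝 x, DifferentiableAt ℝ f y ∧ 0 < f y :=
    (hf.eventually (by simp)).and (continuousAt_const.eventually_lt hf.continuousAt hfx)
      |>.mono fun y hy => ⟨hy.1.differentiableAt (by norm_num), hy.2⟩
  have hdf : HasFDerivAt f (fderiv ℝ f x) x := (hf.differentiableAt (by norm_num)).hasFDerivAt
  have ha : HasFDerivAt (fun y => f y ^ κ) ((κ * f x ^ (κ - 1)) • fderiv ℝ f x) x :=
    hdf.rpow_const (Or.inl hfx.ne')
  rw [pLaplacian_eq_of_pFlux_eventuallyEq_mul hf hx ha.differentiableAt fun i =>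
      hnear.mono fun y hy => pFlux_inv_mul_rpow hy.1 hy.2 hγ i,
    ha.fderiv, smul_apply, smul_eq_mul, fderiv_apply_gradient]
  have hnorm : ‖gradient f x‖ ^ (p - 2) * ‖gradient f x‖ ^ 2 = ‖gradient f x‖ ^ p := by
    rw [← Real.rpow_natCast, ← Real.rpow_add (norm_pos_iff.2 hx)]
    norm_num
  rw [← hnorm]
  ring

end PLaplacian

theorem stmt5_general {N : ℕ} (p B : ℝ) (hp1 : 1 < p)
    (hB : B < p - 1)
    (γ β : ℝ) (hγ : γ = (p - 1 - B) / (p - 1)) (hβ : β = (2 - p) * B / (p - 1 - B))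
    (Ω : Set (EuclideanSpace ℝ (Fin N))) (hΩ : IsOpen Ω)
    (I : Set ℝ)
    (u : ℝ → EuclideanSpace ℝ (Fin N) → ℝ)
    (hpos : ∀ t ∈ I, ∀ x ∈ Ω, 0 < u t x)
    (hspace : ∀ t ∈ I, ContDiffOn ℝ 2 (u t) Ω)
    (hgrad : ∀ t ∈ I, ∀ x ∈ Ω, gradient (u t) x ≠ 0)
    (htime : ∀ x ∈ Ω, ∀ t ∈ I, DifferentiableAt ℝ (fun s => u s x) t)
    (hpde : ∀ t ∈ I, ∀ x ∈ Ω,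
      deriv (fun s => u s x) t - pLaplacian p (u t) x
        + B * ‖gradient (u t) x‖ ^ p / u t x = 0) :
    ∀ t ∈ I, ∀ x ∈ Ω,
      γ ^ β * ((1 / γ) * u t x ^ γ) ^ β * deriv (fun s => (1 / γ) * u s x ^ γ) t
        - pLaplacian p (fun y => (1 / γ) * u t y ^ γ) x = 0 := by
  intro t ht x hx
  have hp : p - 1 ≠ 0 := by linarith
  have hpB : p - 1 - B ≠ 0 := by linarith
  have hγpos : 0 < γ := hγ ▸ div_pos (by linarith) (by linarith)
  have hκ : (γ - 1) * (p - 1) = -B := by rw [hγ]; field_simp; ring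
  have hexp : γ * β + (γ - 1) = -B := by rw [hγ, hβ]; field_simp; ring
  have hu := hpos t ht x hx
  have hΔ := pLaplacian_inv_mul_rpow (p := p) ((hspace t ht).contDiffAt (hΩ.mem_nhds hx)) hu
    (hgrad t ht x hx) hγpos.ne'
  have hdt : deriv (fun s => 1 / γ * u s x ^ γ) t = u t x ^ (γ - 1) * deriv (fun s => u s x) t := by
    rw [(((htime x hx t ht).hasDerivAt.rpow_const (p := γ) (Or.inl hu.ne')).const_mul _).deriv]
    field_simp
  have hcoef : γ ^ β * (1 / γ * u t x ^ γ) ^ β = u t x ^ (γ * β) := by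
    rw [← Real.mul_rpow hγpos.le (by positivity), ← mul_assoc, mul_one_div_cancel hγpos.ne',
      one_mul, ← Real.rpow_mul hu.le]
  rw [hΔ, hκ, hdt, ← mul_assoc, hcoef, ← Real.rpow_add hu, hexp, Real.rpow_sub_one hu.ne']
  linear_combination u t x ^ (-B) * hpde t ht x hx

/-- **Change of variable for the finite-time extinction argument.**
Let `1 < p < 2`, `0 < B < p−1`, and let `u > 0` on `I × Ω` solve
`∂ₜu − Δ_p u + B|∇u|^p/u = 0` there, with continuous time derivative, twice
continuously differentiable in space, and with nonvanishing spatial gradient.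
With `γ = (p−1−B)/(p−1)`, `β = (2−p)B/(p−1−B)` and `w = (1/γ)·u^γ`, the function
`w` satisfies `γ^β · w^β · ∂ₜw − Δ_p w = 0` on `I × Ω`. -/
theorem stmt5 {N : ℕ} (p B : ℝ) (hp1 : 1 < p) (hp2 : p < 2) (hB0 : 0 < B)
    (hB : B < p - 1)
    (γ β : ℝ) (hγ : γ = (p - 1 - B) / (p - 1)) (hβ : β = (2 - p) * B / (p - 1 - B))
    (Ω : Set (EuclideanSpace ℝ (Fin N))) (hΩ : IsOpen Ω)
    (I : Set ℝ) (hI : ∃ a b : ℝ, I = Set.Ioo a b)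
    (u : ℝ → EuclideanSpace ℝ (Fin N) → ℝ)
    (hpos : ∀ t ∈ I, ∀ x ∈ Ω, 0 < u t x)
    (hspace : ∀ t ∈ I, ContDiffOn ℝ 2 (u t) Ω)
    (hgrad : ∀ t ∈ I, ∀ x ∈ Ω, gradient (u t) x ≠ 0)
    (htime : ∀ x ∈ Ω, ∀ t ∈ I, DifferentiableAt ℝ (fun s => u s x) t)
    (htcont : ContinuousOn
      (fun q : ℝ × EuclideanSpace ℝ (Fin N) => deriv (fun s => u s q.2) q.1) (I ×ˢ Ω))
    (hpde : ∀ t ∈ I, ∀ x ∈ Ω,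
      deriv (fun s => u s x) t - pLaplacian p (u t) x
        + B * ‖gradient (u t) x‖ ^ p / u t x = 0) :
    ∀ t ∈ I, ∀ x ∈ Ω,
      γ ^ β * ((1 / γ) * u t x ^ γ) ^ β * deriv (fun s => (1 / γ) * u s x ^ γ) t
        - pLaplacian p (fun y => (1 / γ) * u t y ^ γ) x = 0 :=
  stmt5_general p B hp1 hB γ β hγ hβ Ω hΩ I u hpos hspace hgrad htime hpde
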